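/- arXiv:2412.00910 — 3 statements merged into one kernel-verified Lean document; each statement's English description precedes it below -/
import Mathlib

section
/- Let s_j, s_k ∈ ℂ³ and let A_j = E_j H F_j, A_k = E_k H F_k be their half-spin factorizations with E_j = diag(α_j, β_j), F_j = diag(β_j, −α_j), e_j = (α_j, β_j), ξ_j = (β_j, −α_j) (and similarly for k). Then s_j·s_k = (1/2)·Tr(A_j A_k) = (1/2)(e_j·ξ_k)(e_k·ξ_j) = −(1/2)(ξ_k·e_j)², where all dot products are bilinear. -/
open Matrix

theorem stmt_9 (sj sk : Fin 3 → ℂ) (αj βj αk βk : ℂ)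
    (hαj : αj ^ 2 = -sj 0 + Complex.I * sj 1) (hβj : βj ^ 2 = sj 0 + Complex.I * sj 1)
    (hαβj : αj * βj = sj 2)
    (hαk : αk ^ 2 = -sk 0 + Complex.I * sk 1) (hβk : βk ^ 2 = sk 0 + Complex.I * sk 1)
    (hαβk : αk * βk = sk 2)
    (Aj Ak : Matrix (Fin 2) (Fin 2) ℂ)
    (hAj : Aj = Matrix.diagonal ![αj, βj] * (!![1, 1; 1, 1] : Matrix (Fin 2) (Fin 2) ℂ) *
      Matrix.diagonal ![βj, -αj])
    (hAk : Ak = Matrix.diagonal ![αk, βk] * (!![1, 1; 1, 1] : Matrix (Fin 2) (Fin 2) ℂ) *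
      Matrix.diagonal ![βk, -αk]) :
    sj 0 * sk 0 + sj 1 * sk 1 + sj 2 * sk 2 = (1 / 2) * (Aj * Ak).trace ∧
    sj 0 * sk 0 + sj 1 * sk 1 + sj 2 * sk 2 =
      (1 / 2) * ((αj * βk - βj * αk) * (αk * βj - βk * αj)) ∧
    sj 0 * sk 0 + sj 1 * sk 1 + sj 2 * sk 2 = -(1 / 2) * (βk * αj - αk * βj) ^ 2 := by
  have hIj : Complex.I * sj 1 = (αj ^ 2 + βj ^ 2) / 2 := by linear_combination -(hαj + hβj) / 2
  have hIk : Complex.I * sk 1 = (αk ^ 2 + βk ^ 2) / 2 := by linear_combination -(hαk + hβk) / 2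
  have hsj0 : sj 0 = (βj ^ 2 - αj ^ 2) / 2 := by linear_combination (hαj - hβj) / 2
  have hsk0 : sk 0 = (βk ^ 2 - αk ^ 2) / 2 := by linear_combination (hαk - hβk) / 2
  have h1 : sj 1 * sk 1 = -((αj ^ 2 + βj ^ 2) * (αk ^ 2 + βk ^ 2)) / 4 := by
    linear_combination -(Complex.I * sk 1) * hIj - ((αj ^ 2 + βj ^ 2) / 2) * hIk +
      (sj 1 * sk 1) * Complex.I_sq
  have h0 : sj 0 * sk 0 = (βj ^ 2 - αj ^ 2) * (βk ^ 2 - αk ^ 2) / 4 := by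
    rw [hsj0, hsk0]; ring
  have h2 : sj 2 * sk 2 = (αj * βj) * (αk * βk) := by rw [← hαβj, ← hαβk]
  have htr : (Aj * Ak).trace =
      2 * (αj * βj * (αk * βk)) - αj ^ 2 * βk ^ 2 - βj ^ 2 * αk ^ 2 := by
    subst hAj hAk
    simp [Matrix.trace, Matrix.mul_apply, Fin.sum_univ_succ, Matrix.diagonal]
    ring
  refine ⟨?_, ?_, ?_⟩ <;> rw [h0, h1, h2]
  · rw [htr]; ring
  · ring
  · ring
end

section
/- Suppose B, L, X : ℝ → Matrix (Fin N) (Fin N) ℂ are differentiable, U solves U' = BU with U(0) = I and U(t) invertible, L satisfies L' = [B,L], and X satisfies X' = L + [B,X]. Then X(t) = U(t)(X(0) + t L(0))U(t)⁻¹ for all t. -/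
open Matrix

private lemma entry_mul_hasDerivAt {N : ℕ} {A C : ℝ → Matrix (Fin N) (Fin N) ℂ}
    {A' C' : Matrix (Fin N) (Fin N) ℂ} {t : ℝ}
    (hA : ∀ i j, HasDerivAt (fun s => A s i j) (A' i j) t)
    (hC : ∀ i j, HasDerivAt (fun s => C s i j) (C' i j) t) (i j : Fin N) :
    HasDerivAt (fun s => (A s * C s) i j) ((A' * C t + A t * C') i j) t := by
  simp only [Matrix.mul_apply, Matrix.add_apply]
  rw [← Finset.sum_add_distrib]
  exact HasDerivAt.fun_sum fun k _ => (hA i k).mul (hC k j)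

private lemma det_differentiable {N : ℕ} {M : ℝ → Matrix (Fin N) (Fin N) ℂ}
    (h : ∀ i j, Differentiable ℝ fun s => M s i j) :
    Differentiable ℝ fun s => (M s).det := by
  have : (fun s => (M s).det)
      = fun s => ∑ σ : Equiv.Perm (Fin N),
          ((Equiv.Perm.sign σ : ℤ) : ℂ) * ∏ i, M s (σ i) i := by
    funext s; rw [Matrix.det_apply']
  rw [this]
  exact Differentiable.fun_sum fun σ _ =>
    (Differentiable.fun_finsetProd fun i _ => h (σ i) i).const_mul _

theorem stmt_12 (N : ℕ) (B L X U : ℝ → Matrix (Fin N) (Fin N) ℂ)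
    (hL : ∀ t (i j : Fin N), HasDerivAt (fun s => L s i j) ((B t * L t - L t * B t) i j) t)
    (hX : ∀ t (i j : Fin N),
      HasDerivAt (fun s => X s i j) ((L t + (B t * X t - X t * B t)) i j) t)
    (hU : ∀ t (i j : Fin N), HasDerivAt (fun s => U s i j) ((B t * U t) i j) t)
    (hU0 : U 0 = 1) (hUinv : ∀ t, IsUnit (U t)) :
    ∀ t, X t = U t * (X 0 + t • L 0) * (U t)⁻¹ := by
  set V : ℝ → Matrix (Fin N) (Fin N) ℂ := fun t => (U t)⁻¹ with hV
  have hdetU : ∀ t, IsUnit (U t).det := fun t => (Matrix.isUnit_iff_isUnit_det _).mp (hUinv t)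
  have hUVone : ∀ t, U t * V t = 1 := fun t => Matrix.mul_nonsing_inv _ (hdetU t)
  have hVUone : ∀ t, V t * U t = 1 := fun t => Matrix.nonsing_inv_mul _ (hdetU t)
  -- entrywise differentiability of U
  have hUdiff : ∀ i j, Differentiable ℝ fun s => U s i j := fun i j t =>
    (hU t i j).differentiableAt
  -- entrywise differentiability of V
  have hVdiff : ∀ i j, Differentiable ℝ fun s => V s i j := by
    intro i j t
    have hdet : Differentiable ℝ fun s => (U s).det := det_differentiable hUdiff
    have hadj : Differentiable ℝ fun s => (U s).adjugate i j := by
      have : (fun s => (U s).adjugate i j)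
          = fun s => ((U s).updateRow j (Pi.single i 1)).det := by
        funext s; rw [Matrix.adjugate_apply]
      rw [this]
      refine det_differentiable fun k l => ?_
      simp only [Matrix.updateRow_apply]
      by_cases hk : k = j <;> simp [hk, hUdiff k l, differentiable_const]
    have hne : (U t).det ≠ 0 := (hdetU t).ne_zero
    have : (fun s => V s i j) = fun s => ((U s).det)⁻¹ * (U s).adjugate i j := by
      funext s
      show (U s)⁻¹ i j = _
      rw [Matrix.inv_def, Matrix.smul_apply, Ring.inverse_eq_inv', smul_eq_mul]
    rw [this]
    exact ((hdet.differentiableAt).inv hne).mul (hadj.differentiableAt)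
  -- derivative of V
  set D : ℝ → Matrix (Fin N) (Fin N) ℂ := fun t i j => deriv (fun s => V s i j) t with hD
  have hVder : ∀ t i j, HasDerivAt (fun s => V s i j) (D t i j) t := fun t i j =>
    (hVdiff i j t).hasDerivAt
  have hDval : ∀ t, D t = -(V t * B t) := by
    intro t
    have h1 : ∀ i j, HasDerivAt (fun s => (U s * V s) i j)
        ((B t * U t * V t + U t * D t) i j) t :=
      entry_mul_hasDerivAt (hU t) (hVder t)
    have h2 : ∀ i j, HasDerivAt (fun s => (U s * V s) i j) 0 t := by
      intro i j
      have : (fun s => (U s * V s) i j) = fun _ => (1 : Matrix (Fin N) (Fin N) ℂ) i j := by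
        funext s; rw [hUVone s]
      rw [this]; exact hasDerivAt_const _ _
    have h3 : B t * U t * V t + U t * D t = 0 := by
      ext i j
      exact (h1 i j).unique (h2 i j)
    have h4 : U t * D t = -(B t) := by
      have := h3
      rw [mul_assoc, hUVone t, mul_one] at this
      linear_combination (norm := noncomm_ring) this
    calc D t = (V t * U t) * D t := by rw [hVUone t, one_mul]
      _ = V t * (U t * D t) := by rw [mul_assoc]
      _ = -(V t * B t) := by rw [h4]; noncomm_ring
  -- const-of-zero-derivative helper, applied to V * L * U and V * X * U
  have hconst : ∀ (F : ℝ → Matrix (Fin N) (Fin N) ℂ),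
      (∀ t i j, HasDerivAt (fun s => F s i j) 0 t) → ∀ t, F t = F 0 := by
    intro F hF t
    ext i j
    exact is_const_of_deriv_eq_zero
      (fun s => (hF s i j).differentiableAt)
      (fun s => (hF s i j).deriv) t 0
  -- H = V L U is constant, equals L 0
  have hHder : ∀ t i j, HasDerivAt (fun s => (V s * L s * U s) i j) 0 t := by
    intro t i j
    have h1 : ∀ i j, HasDerivAt (fun s => (V s * L s) i j)
        ((D t * L t + V t * (B t * L t - L t * B t)) i j) t :=
      entry_mul_hasDerivAt (hVder t) (hL t)
    have h2 := entry_mul_hasDerivAt h1 (hU t) i j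
    have h3 : (D t * L t + V t * (B t * L t - L t * B t)) * U t
        + V t * L t * (B t * U t) = 0 := by
      rw [hDval t]
      have hvu := hVUone t
      have huv := hUVone t
      noncomm_ring
    rw [h3] at h2
    simpa using h2
  have hH : ∀ t, V t * L t * U t = L 0 := by
    intro t
    have := hconst _ hHder t
    rw [this, hU0]
    simp [hV, hU0, inv_one]
  -- Z = V X U has derivative L 0
  have hZder : ∀ t i j, HasDerivAt (fun s => (V s * X s * U s) i j) (L 0 i j) t := by
    intro t i j
    have h1 : ∀ i j, HasDerivAt (fun s => (V s * X s) i j)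
        ((D t * X t + V t * (L t + (B t * X t - X t * B t))) i j) t :=
      entry_mul_hasDerivAt (hVder t) (hX t)
    have h2 := entry_mul_hasDerivAt h1 (hU t) i j
    have h3 : (D t * X t + V t * (L t + (B t * X t - X t * B t))) * U t
        + V t * X t * (B t * U t) = L 0 := by
      rw [hDval t, ← hH t]
      noncomm_ring
    rw [h3] at h2
    exact h2
  -- hence V t * X t * U t = X 0 + t • L 0
  have hZ : ∀ t, V t * X t * U t = X 0 + t • L 0 := by
    intro t
    have key : ∀ s, V s * X s * U s - s • L 0 = V 0 * X 0 * U 0 - (0:ℝ) • L 0 := by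
      intro s
      refine hconst (fun s => V s * X s * U s - s • L 0) ?_ s
      intro r i j
      have h1 := hZder r i j
      have h2 : HasDerivAt (fun s : ℝ => s • L 0 i j) (L 0 i j) r := by
        simpa using (hasDerivAt_id r).smul_const (L 0 i j)
      have := h1.fun_sub h2
      simpa [Matrix.sub_apply, Matrix.smul_apply] using this
    have := key t
    simp only [hU0, zero_smul, sub_zero] at this
    have hV0 : V 0 = 1 := by simp [hV, hU0, inv_one]
    have := sub_eq_iff_eq_add.mp this
    rw [this, hV0, one_mul, mul_one, add_comm]
  intro t
  have := hZ t
  calc X t = U t * (V t * X t * U t) * V t := by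
        rw [← mul_assoc, ← mul_assoc, hUVone t, one_mul, mul_assoc, hUVone t, mul_one]
    _ = U t * (X 0 + t • L 0) * (U t)⁻¹ := by rw [hZ t]
end

section
/- Let E_j = diag(α_j, β_j), F_j = diag(β_j, −α_j) for j = 1,…,N, let H be the all-ones 2×2 matrix, and fix coefficients c_{jk} ∈ ℂ for j ≠ k with c_{jk} antisymmetric in a suitable sense via ξ_j·e_k = −(ξ_k·e_j). If Ė_j = −Σ_{k≠j} c_{kj} E_k and Ḟ_j = Σ_{k≠j} c_{jk} F_k where c_{jk} = (ξ_j·e_k)/(x_j−x_k)², then d/dt(E_j H F_j) + Σ_{k≠j} c_{kj} E_k H F_j − Σ_{k≠j} c_{jk} E_j H F_k = 0; equivalently the spin matrices A_j = E_j H F_j satisfy Ȧ_j = Σ_{k≠j} [A_j, A_k]/(x_j−x_k)² using the concatenation identity H F_j E_k H = (ξ_j·e_k)H. -/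
open Matrix Finset

/-- Half-spin matrix `E = diag(α, β)`. -/
def Ehs (α β : ℝ → ℂ) (s : ℝ) : Matrix (Fin 2) (Fin 2) ℂ := Matrix.diagonal ![α s, β s]

/-- Half-spin matrix `F = diag(β, −α)`. -/
def Fhs (α β : ℝ → ℂ) (s : ℝ) : Matrix (Fin 2) (Fin 2) ℂ := Matrix.diagonal ![β s, -α s]

/-- Spin matrix `A = E H F` with `H` the all-ones 2×2 matrix. -/
noncomputable def Ahs (α β : ℝ → ℂ) (s : ℝ) : Matrix (Fin 2) (Fin 2) ℂ :=
  Ehs α β s * (!![1, 1; 1, 1] : Matrix (Fin 2) (Fin 2) ℂ) * Fhs α β s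

theorem stmt_15 (N : ℕ) (α β x : Fin N → ℝ → ℂ) (t : ℝ)
    (hx : ∀ j k, j ≠ k → x j t ≠ x k t)
    -- `Ė_j = −Σ_{k≠j} (ξ_k·e_j)/(x_j−x_k)² E_k`, entrywise
    (hE : ∀ j (i i' : Fin 2),
      HasDerivAt (fun s => Ehs (α j) (β j) s i i')
        ((-∑ k ∈ Finset.univ.erase j,
            ((β k t * α j t - α k t * β j t) / (x j t - x k t) ^ 2) •
              Ehs (α k) (β k) t) i i') t)
    -- `Ḟ_j = Σ_{k≠j} (ξ_j·e_k)/(x_j−x_k)² F_k`, entrywise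
    (hF : ∀ j (i i' : Fin 2),
      HasDerivAt (fun s => Fhs (α j) (β j) s i i')
        ((∑ k ∈ Finset.univ.erase j,
            ((β j t * α k t - α j t * β k t) / (x j t - x k t) ^ 2) •
              Fhs (α k) (β k) t) i i') t) :
    -- `Ȧ_j = Σ_{k≠j} [A_j, A_k]/(x_j−x_k)²`, entrywise
    ∀ j (i i' : Fin 2),
      HasDerivAt (fun s => Ahs (α j) (β j) s i i')
        ((∑ k ∈ Finset.univ.erase j,
            ((x j t - x k t) ^ 2)⁻¹ •
              (Ahs (α j) (β j) t * Ahs (α k) (β k) t -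
                Ahs (α k) (β k) t * Ahs (α j) (β j) t)) i i') t := by

  intro j i i'
  have key : ∀ (γ δ : ℝ → ℂ) (s : ℝ), Ahs γ δ s i i' = Ehs γ δ s i i * Fhs γ δ s i' i' := by
    intro γ δ s
    fin_cases i <;> fin_cases i' <;>
      simp [Ahs, Ehs, Fhs, Matrix.mul_apply, Fin.sum_univ_two]
  have h := (hE j i i).mul (hF j i' i')
  have h2 : HasDerivAt (fun s => Ahs (α j) (β j) s i i')
      ((-∑ k ∈ Finset.univ.erase j,
            ((β k t * α j t - α k t * β j t) / (x j t - x k t) ^ 2) •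
              Ehs (α k) (β k) t) i i * Fhs (α j) (β j) t i' i' +
       Ehs (α j) (β j) t i i *
        (∑ k ∈ Finset.univ.erase j,
            ((β j t * α k t - α j t * β k t) / (x j t - x k t) ^ 2) •
              Fhs (α k) (β k) t) i' i') t := by
    simp only [key]; exact h
  convert h2 using 1
  simp only [Matrix.sum_apply, Matrix.smul_apply, Matrix.sub_apply, Matrix.neg_apply,
    smul_eq_mul, neg_mul, Finset.sum_mul, Finset.mul_sum]
  rw [neg_add_eq_sub, ← Finset.sum_sub_distrib]
  refine Finset.sum_congr rfl fun k hk => ?_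
  fin_cases i <;> fin_cases i' <;>
    simp [Ahs, Ehs, Fhs, Matrix.mul_apply, Fin.sum_univ_two] <;> ring
end
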